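/- Let K be a PL knot in ℝ³, and extend the Tait number to a function T_K : S² → ℝ by setting T_K(ξ) = 0 for ξ ∉ O_K. Then T_K is integrable on S² with respect to the spherical surface measure. -/

import Mathlib

/- Common definitions: PL knots in ℝ³, projections, good (generic) directions,
crossing signs, Tait numbers, the spherical indicatrix and the writhe,
following Cimasoni, "Computing the writhe of a knot". -/

open scoped InnerProductSpace Topology
open MeasureTheory Metric Set

noncomputable section

/-- Euclidean three-space. -/
abbrev E3 : Type := EuclideanSpace ℝ (Fin 3)

/-- The unit sphere S² as a subset of ℝ³. -/
def sphere2 : Set E3 := Metric.sphere (0 : E3) 1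

/-- The spherical (surface) measure on the unit sphere S². -/
def sphMeasure : Measure (Metric.sphere (0 : E3) 1) := MeasureTheory.volume.toSphere

/-- The spherical area of (the trace on S² of) a subset of ℝ³. -/
def sphereArea (A : Set E3) : ℝ :=
  (sphMeasure {ξ : Metric.sphere (0 : E3) 1 | (ξ : E3) ∈ A}).toReal

/-- A closed polygonal curve in ℝ³, recorded by an `n`-periodic sequence of vertices;
the curve is the union of the segments joining consecutive vertices. -/
structure PLKnot where
  n : ℕ
  npos : 0 < n
  vtx : ℤ → E3
  periodic : ∀ i : ℤ, vtx (i + n) = vtx i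

namespace PLKnot

/-- The union of the segments of the polygonal curve. -/
def carrier (K : PLKnot) : Set E3 := ⋃ i : ℤ, segment ℝ (K.vtx i) (K.vtx (i + 1))

/-- The vertices of the polygonal curve. -/
def vertices (K : PLKnot) : Set E3 := Set.range K.vtx

/-- The interior points of `K`: points of `K` that are not vertices. -/
def interiorPts (K : PLKnot) : Set E3 := K.carrier \ K.vertices

/-- A polygonal curve is a PL knot if it is homeomorphic to the circle. -/
def IsKnot (K : PLKnot) : Prop := Nonempty (K.carrier ≃ₜ Circle)

end PLKnot

/-- The orthogonal projection of ℝ³ onto the plane ξ^⊥ (ξ a unit vector),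
with kernel the line ℝξ. -/
def proj (ξ x : E3) : E3 := x - ⟪x, ξ⟫_ℝ • ξ

namespace PLKnot

/-- The fiber of `proj ξ` over the point `proj ξ y`, intersected with `K`. -/
def fiber (K : PLKnot) (ξ y : E3) : Set E3 := {x ∈ K.carrier | proj ξ x = proj ξ y}

/-- `ξ` is a good (generic) projection direction for `K`: every fiber of `proj ξ`
meets `K` in the empty set, a single point, or exactly two interior points of `K`. -/
def IsGoodDir (K : PLKnot) (ξ : E3) : Prop :=
  ∀ y : E3, K.fiber ξ y = ∅ ∨ (∃ p, K.fiber ξ y = {p}) ∨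
    (∃ p q, p ≠ q ∧ p ∈ K.interiorPts ∧ q ∈ K.interiorPts ∧ K.fiber ξ y = {p, q})

/-- The set `O_K ⊆ S²` of good projection directions. -/
def goodDirs (K : PLKnot) : Set E3 := {ξ ∈ sphere2 | K.IsGoodDir ξ}

end PLKnot

/-- The determinant (triple product) of three vectors of ℝ³. -/
def det3 (u w ξ : E3) : ℝ :=
  Matrix.det !![u 0, u 1, u 2; w 0, w 1, w 2; ξ 0, ξ 1, ξ 2]

namespace PLKnot

/-- An index of a segment of `K` containing the point `x` (chosen arbitrarily if there
are several; an interior point of an embedded polygonal curve lies on exactly one). -/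
def segIdx (K : PLKnot) (x : E3) : ℤ :=
  Classical.epsilon fun i : ℤ => x ∈ segment ℝ (K.vtx i) (K.vtx (i + 1))

/-- The direction vector at a point `x` of `K`: the direction of the segment of `K`
through `x`, for the orientation of `K` given by the numbering of its vertices. -/
def dirAt (K : PLKnot) (x : E3) : E3 := K.vtx (K.segIdx x + 1) - K.vtx (K.segIdx x)

end PLKnot

/-- The sign of a double point whose upper strand has direction `u` and lower strand
has direction `w`, for the projection along `ξ`: it is `+1` exactly when the oriented
upper strand has to be turned counterclockwise (in the plane ξ^⊥ oriented by ξ, i.e.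
by an angle in (0, π)) to coincide with the oriented lower strand, which amounts to
`(u × w) · ξ > 0`, and `-1` otherwise. -/
def crossingSign (ξ u w : E3) : ℝ := Real.sign (det3 u w ξ)

namespace PLKnot

/-- The double points of the diagram of `K` in the direction `ξ`, recorded as the
ordered pairs `(p, q)` of distinct points of `K` with the same projection, the first
one (the upper strand) lying above the second one. -/
def crossingPairs (K : PLKnot) (ξ : E3) : Set (E3 × E3) :=
  {z : E3 × E3 | z.1 ∈ K.carrier ∧ z.2 ∈ K.carrier ∧ z.1 ≠ z.2 ∧
    proj ξ z.1 = proj ξ z.2 ∧ ⟪z.2, ξ⟫_ℝ < ⟪z.1, ξ⟫_ℝ}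

/-- The Tait number `T_K(ξ)` of `K` relative to `ξ`: the sum of the signs of all the
double points of the diagram of `K` in the direction `ξ`. -/
def tait (K : PLKnot) (ξ : E3) : ℝ :=
  ∑ᶠ z ∈ K.crossingPairs ξ, crossingSign ξ (K.dirAt z.1) (K.dirAt z.2)

/-- The Tait number, extended by `0` to non-generic directions. -/
def taitExt (K : PLKnot) (ξ : E3) : ℝ :=
  haveI := Classical.propDecidable (K.IsGoodDir ξ)
  if K.IsGoodDir ξ then K.tait ξ else 0

/-- The unit direction `s_i ∈ S²` of the `i`-th segment of `K`. -/
def dirOf (K : PLKnot) (i : ℤ) : E3 :=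
  ‖K.vtx (i + 1) - K.vtx i‖⁻¹ • (K.vtx (i + 1) - K.vtx i)

end PLKnot

/-- The great-circle arc on S² joining two unit vectors `a` and `b`: the radial
projection of the straight segment from `a` to `b`. -/
def arcSet (a b : E3) : Set E3 := (fun z : E3 => ‖z‖⁻¹ • z) '' (segment ℝ a b \ {0})

namespace PLKnot

/-- The curve `Γ ⊆ S²`: the union of the great-circle arcs joining the unit directions
of consecutive segments of `K`. -/
def indHalf (K : PLKnot) : Set E3 := ⋃ i : ℤ, arcSet (K.dirOf i) (K.dirOf (i + 1))

/-- The spherical indicatrix `I = Γ ∪ (−Γ)` of `K`. -/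
def indicatrix (K : PLKnot) : Set E3 := K.indHalf ∪ (fun x : E3 => -x) '' K.indHalf

/-- The writhe of `K`: the mean value over `ξ ∈ S²` of the Tait number `T_K(ξ)`. -/
def writhe (K : PLKnot) : ℝ :=
  (1 / (4 * Real.pi)) * ∫ ξ, K.taitExt ξ ∂sphMeasure

end PLKnot

/-!
Group the crossings of the diagram by the pair of sets of segments through their two strands;
the segment `segIdx` chosen at a point, hence the direction `dirAt`, depends only on this set.
If `p, p'` lie on a segment of direction `u`, `q, q'` on one of direction `w`, and `p - q` and
`p' - q'` are both parallel to `ξ`, then `det(u, w, ξ) ≠ 0` forces `p = p'` and `q = q'`. So each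
class contributes at most one nonzero sign, and `|T_K| ≤ 4ⁿ`. The set of `ξ` for which a given
class is nonempty is the projection of a locally closed subset of a power of ℝ³, and the
complement of the good directions is a union of two such projections; locally closed sets there
are σ-compact, so these projections are σ-compact, hence Borel.
-/

open Function

section SigmaCompact

variable {X Y : Type*} [TopologicalSpace X] [TopologicalSpace Y]

lemma IsLocallyClosed.isSigmaCompact [SigmaCompactSpace X] [PerfectlyNormalSpace X]
    {s : Set X} (hs : IsLocallyClosed s) : IsSigmaCompact s := by
  obtain ⟨U, Z, hU, hZ, rfl⟩ := hs
  obtain ⟨T, hTo, hTc, hT⟩ := hU.isClosed_compl.isGδ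
  have hUT : U = ⋃ t ∈ T, tᶜ := by
    rw [← compl_compl U, hT, compl_sInter, sUnion_image]
  rw [hUT, iUnion₂_inter]
  exact isSigmaCompact_biUnion hTc fun t ht =>
    isSigmaCompact_univ.of_isClosed_subset ((hTo t ht).isClosed_compl.inter hZ) (subset_univ _)

lemma IsSigmaCompact.measurableSet [T2Space X] [MeasurableSpace X] [OpensMeasurableSpace X]
    {s : Set X} (hs : IsSigmaCompact s) : MeasurableSet s := by
  obtain ⟨k, hk, rfl⟩ := hs
  exact .iUnion fun n => (hk n).measurableSet

lemma measurableSet_setOf_exists_of_isLocallyClosed [SigmaCompactSpace (X × Y)]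
    [PerfectlyNormalSpace (X × Y)] [T2Space X] [MeasurableSpace X] [OpensMeasurableSpace X]
    {P : X → Y → Prop} (hP : IsLocallyClosed {v : X × Y | P v.1 v.2}) :
    MeasurableSet {x | ∃ y, P x y} := by
  have : {x | ∃ y, P x y} = Prod.fst '' {v : X × Y | P v.1 v.2} := by ext; simp
  rw [this]
  exact (hP.isSigmaCompact.image continuous_fst).measurableSet

end SigmaCompact

lemma measurable_real_sign : Measurable Real.sign :=
  Measurable.ite (measurableSet_lt measurable_id measurable_const) measurable_const <|
    Measurable.ite (measurableSet_lt measurable_const measurable_id) measurable_const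
      measurable_const

lemma det3_eq (u w ξ : E3) : det3 u w ξ = u 0 * (w 1 * ξ 2 - w 2 * ξ 1) -
    u 1 * (w 0 * ξ 2 - w 2 * ξ 0) + u 2 * (w 0 * ξ 1 - w 1 * ξ 0) := by
  simp [det3, Matrix.det_fin_three]
  ring

lemma continuous_det3 (u w : E3) : Continuous (det3 u w) := by
  simp only [funext (det3_eq u w)]
  fun_prop

lemma measurable_crossingSign (u w : E3) : Measurable fun ξ => crossingSign ξ u w :=
  measurable_real_sign.comp (continuous_det3 u w).measurable

lemma norm_crossingSign_le_one (ξ u w : E3) : ‖crossingSign ξ u w‖ ≤ 1 := by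
  rcases Real.sign_apply_eq (det3 u w ξ) with h | h | h <;> simp [crossingSign, h]

lemma eq_zero_of_det3_ne_zero {u w ξ : E3} (h : det3 u w ξ ≠ 0) {a b c : ℝ}
    (habc : a • u + b • w + c • ξ = 0) : a = 0 ∧ b = 0 := by
  have hj (j : Fin 3) : a * u j + b * w j + c * ξ j = 0 := by
    simpa using congr($habc j)
  rw [det3_eq] at h
  -- `a • det3 u w ξ = (a • u + b • w + c • ξ) ⬝ (w × ξ)`, and similarly for `b` with `ξ × u`
  refine ⟨(mul_eq_zero.1 ?_).resolve_right h, (mul_eq_zero.1 ?_).resolve_right h⟩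
  · linear_combination (w 1 * ξ 2 - w 2 * ξ 1) * hj 0 + (w 2 * ξ 0 - w 0 * ξ 2) * hj 1 +
      (w 0 * ξ 1 - w 1 * ξ 0) * hj 2
  · linear_combination (u 2 * ξ 1 - u 1 * ξ 2) * hj 0 + (u 0 * ξ 2 - u 2 * ξ 0) * hj 1 +
      (u 1 * ξ 0 - u 0 * ξ 1) * hj 2

lemma sub_eq_smul_of_proj_eq {ξ p q : E3} (h : proj ξ p = proj ξ q) :
    p - q = (⟪p, ξ⟫_ℝ - ⟪q, ξ⟫_ℝ) • ξ := by
  rw [sub_smul, sub_eq_sub_iff_sub_eq_sub]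
  exact h

@[fun_prop]
lemma Continuous.proj {α : Type*} [TopologicalSpace α] {f g : α → E3} (hf : Continuous f)
    (hg : Continuous g) : Continuous fun a => proj (f a) (g a) := by
  unfold _root_.proj
  fun_prop

namespace PLKnot

variable (K : PLKnot)

def seg (i : ℤ) : Set E3 := segment ℝ (K.vtx i) (K.vtx (i + 1))

lemma seg_periodic : Periodic K.seg K.n := fun i => by
  simp only [seg, add_right_comm i (K.n : ℤ) 1, K.periodic]

lemma seg_emod (i : ℤ) : K.seg (i % K.n) = K.seg i := by
  rw [Int.emod_def, mul_comm, ← smul_eq_mul, K.seg_periodic.sub_zsmul_eq]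

lemma emod_mem_Ico (i : ℤ) : i % K.n ∈ Finset.Ico 0 (K.n : ℤ) := by
  have hn : (0 : ℤ) < K.n := by exact_mod_cast K.npos
  exact Finset.mem_Ico.2 ⟨Int.emod_nonneg i hn.ne', Int.emod_lt_of_pos i hn⟩

lemma isCompact_seg (i : ℤ) : IsCompact (K.seg i) := by
  rw [seg, segment_eq_image']
  exact isCompact_Icc.image (by fun_prop)

lemma carrier_eq_biUnion_seg : K.carrier = ⋃ j ∈ Finset.Ico 0 (K.n : ℤ), K.seg j := by
  refine Subset.antisymm (iUnion_subset fun i => ?_)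
    (iUnion₂_subset fun j _ => subset_iUnion K.seg j)
  rw [← seg, ← K.seg_emod]
  exact subset_biUnion_of_mem (u := K.seg) (K.emod_mem_Ico i)

lemma isClosed_carrier : IsClosed K.carrier := by
  rw [carrier_eq_biUnion_seg]
  exact (Finset.isCompact_biUnion _ fun j _ => K.isCompact_seg j).isClosed

lemma vertices_subset_carrier : K.vertices ⊆ K.carrier := by
  rintro _ ⟨i, rfl⟩
  exact mem_iUnion.2 ⟨i, left_mem_segment ℝ _ _⟩

lemma isClosed_vertices : IsClosed K.vertices := by
  refine Set.Finite.isClosed (((Finset.Ico 0 (K.n : ℤ)).finite_toSet.image K.vtx).subset ?_)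
  rintro _ ⟨i, rfl⟩
  refine ⟨i % K.n, K.emod_mem_Ico i, ?_⟩
  rw [Int.emod_def, mul_comm, ← smul_eq_mul]
  exact Periodic.sub_zsmul_eq K.periodic _

open Classical in
def segIndices (p : E3) : Finset ℤ := {j ∈ Finset.Ico 0 (K.n : ℤ) | p ∈ K.seg j}

lemma mem_seg_iff {p : E3} (i : ℤ) : p ∈ K.seg i ↔ i % K.n ∈ K.segIndices p := by
  simp [segIndices, K.emod_mem_Ico, K.seg_emod]

open Classical in
lemma segIndices_subset (p : E3) : K.segIndices p ⊆ Finset.Ico 0 (K.n : ℤ) :=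
  Finset.filter_subset _ _

def segIdxOf (S : Finset ℤ) : ℤ := Classical.epsilon fun i : ℤ => i % K.n ∈ S

lemma segIdx_eq_segIdxOf (p : E3) : K.segIdx p = K.segIdxOf (K.segIndices p) := by
  simp only [segIdxOf, ← K.mem_seg_iff]
  rfl

def patternDir (S : Finset ℤ) : E3 := K.vtx (K.segIdxOf S + 1) - K.vtx (K.segIdxOf S)

lemma dirAt_eq_patternDir (p : E3) : K.dirAt p = K.patternDir (K.segIndices p) := by
  rw [dirAt, segIdx_eq_segIdxOf]
  rfl

lemma segIdx_eq_of_segIndices_eq {p q : E3} (h : K.segIndices p = K.segIndices q) :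
    K.segIdx p = K.segIdx q := by
  rw [segIdx_eq_segIdxOf, segIdx_eq_segIdxOf, h]

lemma dirAt_eq_of_segIndices_eq {p q : E3} (h : K.segIndices p = K.segIndices q) :
    K.dirAt p = K.dirAt q := by
  rw [dirAt_eq_patternDir, dirAt_eq_patternDir, h]

lemma exists_eq_add_smul_dirAt {p : E3} (hp : p ∈ K.carrier) :
    ∃ s : ℝ, p = K.vtx (K.segIdx p) + s • K.dirAt p := by
  have hseg : p ∈ K.seg (K.segIdx p) := Classical.epsilon_spec (mem_iUnion.1 hp)
  rw [seg, segment_eq_image'] at hseg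
  obtain ⟨s, -, hs⟩ := hseg
  exact ⟨s, hs.symm⟩

lemma eq_of_segIndices_eq {ξ p q p' q' : E3} (h : (p, q) ∈ K.crossingPairs ξ)
    (h' : (p', q') ∈ K.crossingPairs ξ) (hp : K.segIndices p = K.segIndices p')
    (hq : K.segIndices q = K.segIndices q')
    (hsign : crossingSign ξ (K.dirAt p) (K.dirAt q) ≠ 0) :
    p = p' ∧ q = q' := by
  simp only [crossingPairs, mem_ofPred_eq] at h h'
  obtain ⟨hpK, hqK, -, hpq, -⟩ := h
  obtain ⟨hpK', hqK', -, hpq', -⟩ := h'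
  obtain ⟨s, hs⟩ := K.exists_eq_add_smul_dirAt hpK
  obtain ⟨s', hs'⟩ := K.exists_eq_add_smul_dirAt hpK'
  obtain ⟨t, ht⟩ := K.exists_eq_add_smul_dirAt hqK
  obtain ⟨t', ht'⟩ := K.exists_eq_add_smul_dirAt hqK'
  rw [← K.segIdx_eq_of_segIndices_eq hp, ← K.dirAt_eq_of_segIndices_eq hp] at hs'
  rw [← K.segIdx_eq_of_segIndices_eq hq, ← K.dirAt_eq_of_segIndices_eq hq] at ht'
  have hrel : (s - s') • K.dirAt p + (t' - t) • K.dirAt q +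
      ((⟪p', ξ⟫_ℝ - ⟪q', ξ⟫_ℝ) - (⟪p, ξ⟫_ℝ - ⟪q, ξ⟫_ℝ)) • ξ = 0 := by
    linear_combination (norm := module) hs' - hs + ht - ht' +
      sub_eq_smul_of_proj_eq hpq - sub_eq_smul_of_proj_eq hpq'
  have hdet : det3 (K.dirAt p) (K.dirAt q) ξ ≠ 0 := fun h0 => hsign (by simp [crossingSign, h0])
  obtain ⟨hs_eq, ht_eq⟩ := eq_zero_of_det3_ne_zero hdet hrel
  rw [hs, hs', ht, ht', sub_eq_zero.1 hs_eq, sub_eq_zero.1 ht_eq]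
  exact ⟨rfl, rfl⟩

def segPatterns (z : E3 × E3) : Finset ℤ × Finset ℤ := (K.segIndices z.1, K.segIndices z.2)

def patternSign (ξ : E3) (w : Finset ℤ × Finset ℤ) : ℝ :=
  crossingSign ξ (K.patternDir w.1) (K.patternDir w.2)

lemma crossingSign_dirAt (ξ : E3) (z : E3 × E3) :
    crossingSign ξ (K.dirAt z.1) (K.dirAt z.2) = K.patternSign ξ (K.segPatterns z) := by
  simp only [patternSign, segPatterns, dirAt_eq_patternDir]

lemma injOn_segPatterns (ξ : E3) :
    InjOn K.segPatterns (K.crossingPairs ξ ∩ support (K.patternSign ξ ∘ K.segPatterns)) := by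
  rintro ⟨p, q⟩ ⟨hz, hsign⟩ ⟨p', q'⟩ ⟨hz', -⟩ hpat
  rw [mem_support, comp_apply, ← crossingSign_dirAt] at hsign
  obtain ⟨rfl, rfl⟩ := K.eq_of_segIndices_eq hz hz' (congrArg Prod.fst hpat)
    (congrArg Prod.snd hpat) hsign
  rfl

def crossingPatterns (ξ : E3) : Set (Finset ℤ × Finset ℤ) := K.segPatterns '' K.crossingPairs ξ

def patternPairs : Finset (Finset ℤ × Finset ℤ) :=
  (Finset.Ico 0 (K.n : ℤ)).powerset ×ˢ (Finset.Ico 0 (K.n : ℤ)).powerset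

lemma crossingPatterns_subset (ξ : E3) : K.crossingPatterns ξ ⊆ K.patternPairs := by
  rintro _ ⟨z, -, rfl⟩
  simp only [patternPairs, segPatterns, Finset.coe_product, mem_prod, Finset.mem_coe,
    Finset.mem_powerset]
  exact ⟨K.segIndices_subset _, K.segIndices_subset _⟩

theorem tait_eq_sum_indicator (ξ : E3) :
    K.tait ξ = ∑ w ∈ K.patternPairs, (K.crossingPatterns ξ).indicator (K.patternSign ξ) w :=
  calc K.tait ξ = ∑ᶠ z ∈ K.crossingPairs ξ, K.patternSign ξ (K.segPatterns z) := by
        simp only [tait, crossingSign_dirAt]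
    _ = ∑ᶠ w ∈ K.crossingPatterns ξ, K.patternSign ξ w :=
        (finsum_mem_image' (K.injOn_segPatterns ξ)).symm
    _ = _ := by
        rw [finsum_mem_def, finsum_eq_sum_of_support_subset]
        exact support_indicator_subset.trans (K.crossingPatterns_subset ξ)

lemma norm_tait_le (ξ : E3) : ‖K.tait ξ‖ ≤ K.patternPairs.card := by
  rw [tait_eq_sum_indicator]
  refine (norm_sum_le _ _).trans <|
    (Finset.sum_le_card_nsmul _ _ 1 fun w _ => ?_).trans_eq (by simp)
  exact norm_indicator_le_norm_self _ _ |>.trans (norm_crossingSign_le_one _ _ _)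

lemma norm_taitExt_le (ξ : E3) : ‖K.taitExt ξ‖ ≤ K.patternPairs.card := by
  unfold taitExt
  split_ifs
  · exact K.norm_tait_le ξ
  · simp

lemma isClosed_setOf_mem_segIndices (j : ℤ) : IsClosed {p | j ∈ K.segIndices p} := by
  by_cases hj : j ∈ Finset.Ico 0 (K.n : ℤ)
  · simpa [segIndices, hj] using (K.isCompact_seg j).isClosed
  · simp [segIndices, hj]

lemma isLocallyClosed_setOf_segIndices_eq (S : Finset ℤ) :
    IsLocallyClosed {p | K.segIndices p = S} := by
  have hS : {p | K.segIndices p = S} = (⋂ j ∈ S, {p | j ∈ K.segIndices p}) ∩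
      ⋂ j ∈ Finset.Ico 0 (K.n : ℤ) \ S, {p | j ∈ K.segIndices p}ᶜ := by
    ext p
    simp only [mem_ofPred_eq, mem_inter_iff, mem_iInter, mem_compl_iff, Finset.mem_sdiff]
    refine ⟨by rintro rfl; exact ⟨fun j hj => hj, fun j hj => hj.2⟩, fun ⟨h1, h2⟩ => ?_⟩
    ext j
    exact ⟨fun hj => by_contra fun hjS => h2 j ⟨K.segIndices_subset p hj, hjS⟩ hj, h1 j⟩
  rw [hS]
  exact (isClosed_biInter fun j _ => K.isClosed_setOf_mem_segIndices j).isLocallyClosed.inter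
    (isOpen_biInter_finset fun j _ =>
      (K.isClosed_setOf_mem_segIndices j).isOpen_compl).isLocallyClosed

lemma isLocallyClosed_setOf_mem_crossingPairs :
    IsLocallyClosed {v : E3 × E3 × E3 | v.2 ∈ K.crossingPairs v.1} := by
  simp only [crossingPairs, ofPred_and]
  exact (K.isClosed_carrier.preimage (by fun_prop)).isLocallyClosed.inter <|
    (K.isClosed_carrier.preimage (by fun_prop)).isLocallyClosed.inter <|
    (isOpen_ne_fun (by fun_prop) (by fun_prop)).isLocallyClosed.inter <|
    (isClosed_eq (by fun_prop) (by fun_prop)).isLocallyClosed.inter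
    (isOpen_lt (by fun_prop) (by fun_prop)).isLocallyClosed

lemma measurableSet_setOf_mem_crossingPatterns (w : Finset ℤ × Finset ℤ) :
    MeasurableSet {ξ | w ∈ K.crossingPatterns ξ} := by
  refine measurableSet_setOf_exists_of_isLocallyClosed
    (P := fun ξ z => z ∈ K.crossingPairs ξ ∧ K.segPatterns z = w) ?_
  simp only [ofPred_and, segPatterns, Prod.ext_iff]
  exact K.isLocallyClosed_setOf_mem_crossingPairs.inter <|
    ((K.isLocallyClosed_setOf_segIndices_eq w.1).preimage (by fun_prop)).inter
    ((K.isLocallyClosed_setOf_segIndices_eq w.2).preimage (by fun_prop))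

lemma measurable_tait : Measurable K.tait := by
  simp only [funext K.tait_eq_sum_indicator]
  exact Finset.measurable_sum _ fun w _ => (measurable_crossingSign _ _).ite
    (K.measurableSet_setOf_mem_crossingPatterns w) measurable_const

def VertexOverlap (ξ : E3) : Prop :=
  ∃ p q : E3, p ∈ K.vertices ∧ q ∈ K.carrier ∧ p ≠ q ∧ proj ξ p = proj ξ q

def TripleOverlap (ξ : E3) : Prop :=
  ∃ p q r : E3, p ∈ K.carrier ∧ q ∈ K.carrier ∧ r ∈ K.carrier ∧ p ≠ q ∧ p ≠ r ∧ q ≠ r ∧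
    proj ξ p = proj ξ q ∧ proj ξ p = proj ξ r

lemma fiber_eq_pair_of_isGoodDir {ξ y p q : E3} (hξ : K.IsGoodDir ξ) (hp : p ∈ K.fiber ξ y)
    (hq : q ∈ K.fiber ξ y) (hpq : p ≠ q) : K.fiber ξ y = {p, q} ∧ p ∈ K.interiorPts := by
  rcases hξ y with h | ⟨a, h⟩ | ⟨a, b, -, ha, hb, h⟩
  · simp [h] at hp
  · rw [h] at hp hq
    exact absurd (hp.trans hq.symm) hpq
  · rw [h] at hp hq ⊢
    rcases hp with rfl | rfl <;> rcases hq with rfl | rfl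
    exacts [absurd rfl hpq, ⟨rfl, ha⟩, ⟨pair_comm _ _, hb⟩, absurd rfl hpq]

lemma isGoodDir_of_not_overlap {ξ : E3} (hV : ¬K.VertexOverlap ξ) (hT : ¬K.TripleOverlap ξ) :
    K.IsGoodDir ξ := by
  intro y
  rcases (K.fiber ξ y).eq_empty_or_nonempty with h | h
  · exact Or.inl h
  rcases h.exists_eq_singleton_or_nontrivial with h | ⟨p, hp, q, hq, hpq⟩
  · exact Or.inr (Or.inl h)
  have hint {a b : E3} (ha : a ∈ K.fiber ξ y) (hb : b ∈ K.fiber ξ y) (hab : a ≠ b) :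
      a ∈ K.interiorPts :=
    ⟨ha.1, fun hv => hV ⟨a, b, hv, hb.1, hab, ha.2.trans hb.2.symm⟩⟩
  refine Or.inr (Or.inr ⟨p, q, hpq, hint hp hq hpq, hint hq hp hpq.symm, ?_⟩)
  refine Subset.antisymm (fun r hr => ?_) (insert_subset hp (singleton_subset_iff.2 hq))
  by_contra hne
  simp only [mem_insert_iff, mem_singleton_iff, not_or] at hne
  exact hT ⟨p, q, r, hp.1, hq.1, hr.1, hpq, Ne.symm hne.1, Ne.symm hne.2,
    hp.2.trans hq.2.symm, hp.2.trans hr.2.symm⟩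

lemma isGoodDir_iff (ξ : E3) : K.IsGoodDir ξ ↔ ¬K.VertexOverlap ξ ∧ ¬K.TripleOverlap ξ := by
  refine ⟨fun hξ => ⟨?_, ?_⟩, fun h => K.isGoodDir_of_not_overlap h.1 h.2⟩
  · rintro ⟨p, q, hp, hq, hpq, hproj⟩
    exact (K.fiber_eq_pair_of_isGoodDir hξ ⟨K.vertices_subset_carrier hp, rfl⟩
      ⟨hq, hproj.symm⟩ hpq).2.2 hp
  · rintro ⟨p, q, r, hp, hq, hr, hpq, hpr, hqr, hpq', hpr'⟩
    have hr' : r ∈ K.fiber ξ p := ⟨hr, hpr'.symm⟩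
    rw [(K.fiber_eq_pair_of_isGoodDir hξ ⟨hp, rfl⟩ ⟨hq, hpq'.symm⟩ hpq).1] at hr'
    rcases hr' with rfl | rfl
    exacts [hpr rfl, hqr rfl]

lemma measurableSet_setOf_vertexOverlap : MeasurableSet {ξ | K.VertexOverlap ξ} := by
  simp only [VertexOverlap, ← Prod.exists']
  refine measurableSet_setOf_exists_of_isLocallyClosed ?_
  simp only [ofPred_and]
  exact (K.isClosed_vertices.preimage (by fun_prop)).isLocallyClosed.inter <|
    (K.isClosed_carrier.preimage (by fun_prop)).isLocallyClosed.inter <|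
    (isOpen_ne_fun (by fun_prop) (by fun_prop)).isLocallyClosed.inter
    (isClosed_eq (by fun_prop) (by fun_prop)).isLocallyClosed

lemma measurableSet_setOf_tripleOverlap : MeasurableSet {ξ | K.TripleOverlap ξ} := by
  simp only [TripleOverlap, ← Prod.exists']
  refine measurableSet_setOf_exists_of_isLocallyClosed ?_
  simp only [ofPred_and]
  exact (K.isClosed_carrier.preimage (by fun_prop)).isLocallyClosed.inter <|
    (K.isClosed_carrier.preimage (by fun_prop)).isLocallyClosed.inter <|
    (K.isClosed_carrier.preimage (by fun_prop)).isLocallyClosed.inter <|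
    (isOpen_ne_fun (by fun_prop) (by fun_prop)).isLocallyClosed.inter <|
    (isOpen_ne_fun (by fun_prop) (by fun_prop)).isLocallyClosed.inter <|
    (isOpen_ne_fun (by fun_prop) (by fun_prop)).isLocallyClosed.inter <|
    (isClosed_eq (by fun_prop) (by fun_prop)).isLocallyClosed.inter
    (isClosed_eq (by fun_prop) (by fun_prop)).isLocallyClosed

lemma measurable_taitExt : Measurable K.taitExt := by
  have hgood : MeasurableSet {ξ | K.IsGoodDir ξ} := by
    simp only [isGoodDir_iff, ofPred_and]
    exact K.measurableSet_setOf_vertexOverlap.compl.inter K.measurableSet_setOf_tripleOverlap.compl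
  unfold taitExt
  exact K.measurable_tait.ite hgood measurable_const

end PLKnot

theorem tait_integrable_general (K : PLKnot) :
    MeasureTheory.Integrable (fun ξ : Metric.sphere (0 : E3) 1 => K.taitExt ξ)
      sphMeasure := by
  have : IsFiniteMeasure sphMeasure := by unfold sphMeasure; infer_instance
  exact .of_bound (K.measurable_taitExt.comp measurable_subtype_coe).aestronglyMeasurable _
    (.of_forall fun ξ => K.norm_taitExt_le ξ)

/-- Let `K` be a PL knot in ℝ³, and extend the Tait number to a
function `T_K : S² → ℝ` by setting `T_K(ξ) = 0` for `ξ ∉ O_K`. Then `T_K` is integrable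
on S² with respect to the spherical surface measure. -/
theorem tait_integrable (K : PLKnot) (hK : K.IsKnot) :
    MeasureTheory.Integrable (fun ξ : Metric.sphere (0 : E3) 1 => K.taitExt ξ)
      sphMeasure :=
  tait_integrable_general K
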